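/- arXiv:2505.16473 — 4 statements merged into one kernel-verified Lean document; each statement's English description precedes it below -/
import Mathlib

section
/- For any real m×n matrix A and any real t>1, there exists a nonzero integer vector q ∈ ℤⁿ such that the distance from Aq to the nearest integer vector satisfies ‖Aq‖_ℤ ≤ t^{-1/m} coordinate-wise (i.e. max_i ‖(Aq)_i‖_ℤ ≤ t^{-1/m}) and |q|ⁿ < t, where |q| is the supremum norm. -/
/-- Distance from a real number to the nearest integer. -/
noncomputable def distZ (x : ℝ) : ℝ := |x - round x|

lemma distZ_le (x : ℝ) (k : ℤ) : distZ x ≤ |x - k| := by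
  by_cases h : (1:ℝ)/2 ≤ |x - k|
  · exact (abs_sub_round x).trans h
  · push_neg at h
    have hk : round x = k := by
      have h2 : |(round x : ℝ) - k| < 1 := by
        calc |(round x : ℝ) - k| ≤ |(round x : ℝ) - x| + |x - k| := abs_sub_le _ x _
          _ < 1/2 + 1/2 := by
              have h3 := abs_sub_round x; rw [abs_sub_comm] at h3; linarith
          _ = 1 := by norm_num
      have h4 : |((round x - k : ℤ) : ℝ)| < 1 := by push_cast; exact h2
      have h5 : |round x - k| < 1 := by exact_mod_cast h4
      have := Int.abs_lt_one_iff.mp h5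
      omega
    rw [distZ, hk]

open MeasureTheory Submodule Matrix

lemma minkowski_step (m n : ℕ) (hm : 0 < m) (A : Matrix (Fin m) (Fin n) ℝ)
    (δ r : ℝ) (hδ0 : 0 < δ) (hδ1 : δ < 1) (hr : 0 < r)
    (hvol : 1 < δ ^ m * r ^ n) :
    ∃ q : Fin n → ℤ, q ≠ 0 ∧ (∀ j, |(q j : ℝ)| ≤ r) ∧
      ∀ i, distZ (∑ j, A i j * (q j : ℝ)) ≤ δ := by
  classical
  set b := Pi.basisFun ℝ (Fin m ⊕ Fin n) with hb
  set L := (span ℤ (Set.range b)).toAddSubgroup with hL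
  haveI : Countable L := (inferInstance : Countable (span ℤ (Set.range b)))
  have fund := ZSpan.isAddFundamentalDomain' b (volume : Measure ((Fin m ⊕ Fin n) → ℝ))
  set c : (Fin m ⊕ Fin n) → ℝ := Sum.elim (fun _ => δ) (fun _ => r) with hc
  set B : Set ((Fin m ⊕ Fin n) → ℝ) := Set.pi Set.univ (fun k => Set.Icc (-(c k)) (c k)) with hB
  set M : Matrix (Fin m ⊕ Fin n) (Fin m ⊕ Fin n) ℝ := Matrix.fromBlocks 1 A 0 1 with hM
  set T : ((Fin m ⊕ Fin n) → ℝ) →ₗ[ℝ] ((Fin m ⊕ Fin n) → ℝ) := Matrix.toLin' M with hT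
  set S : Set ((Fin m ⊕ Fin n) → ℝ) := T '' B with hS
  have hTl : ∀ (x : (Fin m ⊕ Fin n) → ℝ) (i : Fin m),
      T x (Sum.inl i) = x (Sum.inl i) + ∑ j, A i j * x (Sum.inr j) := by
    intro x i
    rw [hT, Matrix.toLin'_apply]
    rw [Matrix.mulVec, dotProduct, Fintype.sum_sum_type]
    simp [hM, Matrix.one_apply, Finset.sum_ite_eq]
  have hTr : ∀ (x : (Fin m ⊕ Fin n) → ℝ) (j : Fin n),
      T x (Sum.inr j) = x (Sum.inr j) := by
    intro x j
    rw [hT, Matrix.toLin'_apply]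
    rw [Matrix.mulVec, dotProduct, Fintype.sum_sum_type]
    simp [hM, Matrix.one_apply, Finset.sum_ite_eq]
  have hBconv : Convex ℝ B := convex_pi (fun k _ => convex_Icc _ _)
  have hSconv : Convex ℝ S := hBconv.linear_image T
  have hSsymm : ∀ x ∈ S, -x ∈ S := by
    rintro x ⟨y, hy, rfl⟩
    refine ⟨-y, fun k _ => ?_, map_neg T y⟩
    have h := hy k (Set.mem_univ k)
    simp only [Set.mem_Icc] at h ⊢
    constructor <;> simp <;> linarith [h.1, h.2]
  have hfd : volume (ZSpan.fundamentalDomain b) = 1 := by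
    rw [hb, ZSpan.fundamentalDomain_pi_basisFun, volume_pi_pi]
    simp
  have hdet : LinearMap.det T = 1 := by
    rw [hT, LinearMap.det_toLin', hM, Matrix.det_fromBlocks_zero₂₁]
    simp
  have hBmeas : volume B = ENNReal.ofReal ((2*δ)^m * (2*r)^n) := by
    rw [hB, volume_pi_pi]
    have h : ∀ k, volume (Set.Icc (-(c k)) (c k)) = ENNReal.ofReal (2 * c k) := by
      intro k; rw [Real.volume_Icc]; ring_nf
    simp_rw [h]
    rw [Fintype.prod_sum_type]
    simp only [hc, Sum.elim_inl, Sum.elim_inr, Finset.prod_const, Finset.card_univ,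
      Fintype.card_fin]
    rw [← ENNReal.ofReal_pow (by linarith), ← ENNReal.ofReal_pow (by linarith),
      ← ENNReal.ofReal_mul (by positivity)]
  have hSmeas : volume S = ENNReal.ofReal ((2*δ)^m * (2*r)^n) := by
    rw [hS, Measure.addHaar_image_linearMap, hdet, hBmeas]
    simp
  have hrank : Module.finrank ℝ ((Fin m ⊕ Fin n) → ℝ) = m + n := by
    rw [Module.finrank_fintype_fun_eq_card]
    simp
  have hlt : volume (ZSpan.fundamentalDomain b) * 2 ^ Module.finrank ℝ ((Fin m ⊕ Fin n) → ℝ)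
      < volume S := by
    rw [hfd, hSmeas, hrank, one_mul]
    have h2 : ((2:ENNReal)) ^ (m+n) = ENNReal.ofReal (2 ^ (m+n)) := by
      rw [ENNReal.ofReal_pow (by norm_num)]; norm_num
    rw [h2, ENNReal.ofReal_lt_ofReal_iff (by positivity)]
    have h3 : (2*δ)^m * (2*r)^n = 2^(m+n) * (δ^m * r^n) := by ring
    rw [h3]
    nlinarith [pow_pos (show (0:ℝ) < 2 by norm_num) (m+n)]
  obtain ⟨x, hx0, hxS⟩ :=
    exists_ne_zero_mem_lattice_of_measure_mul_two_pow_lt_measure fund hSsymm hSconv hlt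
  have hint : ∀ k, ∃ z : ℤ, (z : ℝ) = (x : (Fin m ⊕ Fin n) → ℝ) k := by
    intro k
    have h := ((Pi.basisFun ℝ (Fin m ⊕ Fin n)).mem_span_iff_repr_mem ℤ
      (x : (Fin m ⊕ Fin n) → ℝ)).mp (SetLike.coe_mem x) k
    simpa [Pi.basisFun_repr] using h
  choose v hv using hint
  obtain ⟨y, hy, hTy⟩ := hxS
  have hxr : ∀ j, (x : (Fin m ⊕ Fin n) → ℝ) (Sum.inr j) = y (Sum.inr j) := by
    intro j; rw [← hTy]; exact hTr y j
  have hxl : ∀ i, ∑ j, A i j * (x : (Fin m ⊕ Fin n) → ℝ) (Sum.inr j)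
      - (x : (Fin m ⊕ Fin n) → ℝ) (Sum.inl i) = - y (Sum.inl i) := by
    intro i
    simp_rw [hxr]
    rw [← hTy, hTl y i]
    ring
  have hybound : ∀ k, |y k| ≤ c k := by
    intro k
    have h := hy k (Set.mem_univ k)
    rw [Set.mem_Icc] at h
    exact abs_le.mpr h
  refine ⟨fun j => v (Sum.inr j), ?_, ?_, ?_⟩
  · intro hq
    apply hx0
    have hqz : ∀ j, (x : (Fin m ⊕ Fin n) → ℝ) (Sum.inr j) = 0 := by
      intro j
      rw [← hv (Sum.inr j)]
      have h := congrFun hq j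
      simp only [Pi.zero_apply] at h
      rw [h]; norm_num
    have hpz : ∀ i, (x : (Fin m ⊕ Fin n) → ℝ) (Sum.inl i) = 0 := by
      intro i
      have h1 := hxl i
      simp_rw [hqz] at h1
      simp only [mul_zero, Finset.sum_const_zero, zero_sub] at h1
      have h2 := hybound (Sum.inl i)
      simp only [hc, Sum.elim_inl] at h2
      have h1' : (x : (Fin m ⊕ Fin n) → ℝ) (Sum.inl i) = y (Sum.inl i) := by
        have := neg_injective h1; exact this
      rw [← h1'] at h2
      rw [← hv (Sum.inl i)] at h2 ⊢
      have h6 : |(v (Sum.inl i) : ℝ)| < 1 := lt_of_le_of_lt h2 hδ1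
      have h7 : |v (Sum.inl i)| < 1 := by exact_mod_cast (by push_cast; exact h6 :
        |((v (Sum.inl i) : ℤ) : ℝ)| < 1)
      have h8 := Int.abs_lt_one_iff.mp h7
      rw [h8]; norm_num
    have hx : (x : (Fin m ⊕ Fin n) → ℝ) = 0 := by
      funext k
      cases k with
      | inl i => exact hpz i
      | inr j => exact hqz j
    exact (ZeroMemClass.coe_eq_zero).mp hx
  · intro j
    rw [hv (Sum.inr j), hxr j]
    have h := hybound (Sum.inr j)
    simpa [hc] using h
  · intro i
    calc distZ (∑ j, A i j * (v (Sum.inr j) : ℝ))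
        ≤ |(∑ j, A i j * (v (Sum.inr j) : ℝ)) - v (Sum.inl i)| := distZ_le _ _
      _ ≤ δ := by
          simp_rw [hv]
          rw [hxl i, abs_neg]
          have h := hybound (Sum.inl i)
          simpa [hc] using h

/-- Dirichlet's theorem (1842): for any real `m × n` matrix `A` and any `t > 1` there is a
nonzero integer vector `q` with `‖Aq‖_ℤ ≤ t^{-1/m}` coordinatewise and `|q|^n < t`. -/
theorem dirichlet_theorem (m n : ℕ) (hm : 0 < m) (hn : 0 < n)
    (A : Matrix (Fin m) (Fin n) ℝ) (t : ℝ) (ht : 1 < t) :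
    ∃ q : Fin n → ℤ, q ≠ 0 ∧
      (∀ i : Fin m, distZ (∑ j, A i j * (q j : ℝ)) ≤ t ^ (-(1 : ℝ) / m)) ∧
      ((⨆ j, |(q j : ℝ)|) ^ n < t) := by
  classical
  have ht0 : (0:ℝ) < t := by linarith
  have hmR : (0:ℝ) < m := by exact_mod_cast hm
  have hnR : (0:ℝ) < n := by exact_mod_cast hn
  set d : ℝ := t ^ (-(1 : ℝ) / m) with hd
  have hd0 : 0 < d := Real.rpow_pos_of_pos ht0 _
  have hd1 : d < 1 := by
    apply Real.rpow_lt_one_of_one_lt_of_neg ht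
    rw [neg_div]
    have : (0:ℝ) < 1 / m := by positivity
    linarith
  have hdm : d ^ m = t⁻¹ := by
    rw [hd, ← Real.rpow_natCast (t ^ (-(1 : ℝ) / m)) m, ← Real.rpow_mul ht0.le]
    rw [div_mul_cancel₀]
    · exact Real.rpow_neg_one t
    · exact ne_of_gt hmR
  set u : ℝ := t ^ ((1 : ℝ) / n) with hu
  have hu1 : 1 < u := by
    rw [hu]
    apply Real.one_lt_rpow_iff_of_pos ht0 |>.mpr
    exact Or.inl ⟨ht, by positivity⟩
  have hun : u ^ n = t := by
    rw [hu, ← Real.rpow_natCast (t ^ ((1 : ℝ) / n)) n, ← Real.rpow_mul ht0.le,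
      one_div_mul_cancel (ne_of_gt hnR), Real.rpow_one]
  set Q : ℤ := ⌈u⌉ - 1 with hQ
  have hQ1 : 1 ≤ Q := by
    have : (1:ℤ) < ⌈u⌉ := by rwa [Int.lt_ceil, Int.cast_one]
    omega
  have hQu : (Q:ℝ) < u := by
    have := Int.ceil_lt_add_one u
    push_cast [hQ]
    push_cast at this
    linarith
  have huQ : u ≤ (Q:ℝ) + 1 := by
    have := Int.le_ceil u
    push_cast [hQ]
    linarith
  have hQ0 : (0:ℝ) ≤ (Q:ℝ) := by exact_mod_cast (by omega : (0:ℤ) ≤ Q)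
  have hQn : ((Q:ℝ) + 1) ^ n ≥ t := by
    calc ((Q:ℝ) + 1) ^ n ≥ u ^ n := pow_le_pow_left₀ (by linarith) huQ n
      _ = t := hun
  -- key: for every ε > 0 there is a good q with |q j| ≤ Q
  have key : ∀ ε : ℝ, 0 < ε → ∃ q : Fin n → ℤ, q ≠ 0 ∧ (∀ j, |q j| ≤ Q) ∧
      ∀ i, distZ (∑ j, A i j * (q j : ℝ)) ≤ d + ε := by
    intro ε hε
    set δ : ℝ := d + min ε ((1 - d)/2) with hδ
    have hδd : d < δ := by
      have : 0 < min ε ((1 - d)/2) := lt_min hε (by linarith)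
      rw [hδ]; linarith
    have hδ0 : 0 < δ := lt_trans hd0 hδd
    have hδ1 : δ < 1 := by
      have : min ε ((1 - d)/2) ≤ (1 - d)/2 := min_le_right _ _
      rw [hδ]; linarith
    have hδm : t⁻¹ < δ ^ m := by
      rw [← hdm]
      exact pow_lt_pow_left₀ hδd hd0.le (by omega)
    have hδmpos : 0 < δ ^ m := pow_pos hδ0 m
    have hinv : (δ ^ m)⁻¹ < t := by
      rw [← inv_inv t]
      exact inv_strictAnti₀ (inv_pos.mpr ht0) hδm
    set a : ℝ := ((δ ^ m)⁻¹ + ((Q:ℝ) + 1) ^ n) / 2 with ha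
    have hainv : (δ ^ m)⁻¹ < a := by
      have : (δ ^ m)⁻¹ < ((Q:ℝ) + 1) ^ n := lt_of_lt_of_le hinv hQn
      rw [ha]; linarith
    have haQ : a < ((Q:ℝ) + 1) ^ n := by
      have : (δ ^ m)⁻¹ < ((Q:ℝ) + 1) ^ n := lt_of_lt_of_le hinv hQn
      rw [ha]; linarith
    have ha0 : 0 < a := lt_trans (inv_pos.mpr hδmpos) hainv
    set r : ℝ := a ^ ((1:ℝ) / n) with hr
    have hr0 : 0 < r := Real.rpow_pos_of_pos ha0 _
    have hrn : r ^ n = a := by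
      rw [hr, ← Real.rpow_natCast (a ^ ((1:ℝ)/n)) n, ← Real.rpow_mul ha0.le,
        one_div_mul_cancel (ne_of_gt hnR), Real.rpow_one]
    have hvol : 1 < δ ^ m * r ^ n := by
      rw [hrn]
      calc (1:ℝ) = δ ^ m * (δ ^ m)⁻¹ := (mul_inv_cancel₀ (ne_of_gt hδmpos)).symm
        _ < δ ^ m * a := by exact (mul_lt_mul_iff_right₀ hδmpos).mpr hainv
    obtain ⟨q, hq0, hqr, hqd⟩ := minkowski_step m n hm A δ r hδ0 hδ1 hr0 hvol
    have hrQ : r < (Q:ℝ) + 1 := by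
      have h1 : r ^ n < ((Q:ℝ) + 1) ^ n := by rw [hrn]; exact haQ
      by_contra hcon
      push_neg at hcon
      exact absurd h1 (not_lt.mpr (pow_le_pow_left₀ (by linarith) hcon n))
    refine ⟨q, hq0, ?_, ?_⟩
    · intro j
      have h1 : (|q j| : ℝ) < (Q:ℝ) + 1 := by
        push_cast
        exact lt_of_le_of_lt (hqr j) hrQ
      have : |q j| < Q + 1 := by exact_mod_cast h1
      omega
    · intro i
      calc distZ (∑ j, A i j * (q j : ℝ)) ≤ δ := hqd i
        _ ≤ d + ε := by
            have : min ε ((1 - d)/2) ≤ ε := min_le_left _ _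
            rw [hδ]; linarith
  -- the finite candidate set
  set 𝒮 : Finset (Fin n → ℤ) :=
    (Fintype.piFinset fun _ : Fin n => Finset.Icc (-Q) Q).filter (fun q => q ≠ 0) with h𝒮
  have hmem : ∀ q : Fin n → ℤ, q ∈ 𝒮 ↔ (∀ j, -Q ≤ q j ∧ q j ≤ Q) ∧ q ≠ 0 := by
    intro q
    simp [h𝒮, Fintype.mem_piFinset, Finset.mem_Icc]
  haveI : Nonempty (Fin m) := ⟨⟨0, hm⟩⟩
  haveI : Nonempty (Fin n) := ⟨⟨0, hn⟩⟩
  set g : (Fin n → ℤ) → ℝ :=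
    fun q => Finset.univ.sup' Finset.univ_nonempty (fun i : Fin m => distZ (∑ j, A i j * (q j : ℝ)))
    with hg
  have h𝒮ne : 𝒮.Nonempty := by
    obtain ⟨q, hq0, hqQ, -⟩ := key 1 one_pos
    exact ⟨q, (hmem q).mpr ⟨fun j => abs_le.mp (hqQ j), hq0⟩⟩
  obtain ⟨q₀, hq₀S, hq₀min⟩ := Finset.exists_min_image 𝒮 g h𝒮ne
  obtain ⟨hq₀Q, hq₀0⟩ := (hmem q₀).mp hq₀S
  have hgle : g q₀ ≤ d := by
    apply le_of_forall_pos_le_add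
    intro ε hε
    obtain ⟨q, hq0, hqQ, hqd⟩ := key ε hε
    have hqS : q ∈ 𝒮 := (hmem q).mpr ⟨fun j => abs_le.mp (hqQ j), hq0⟩
    calc g q₀ ≤ g q := hq₀min q hqS
      _ ≤ d + ε := Finset.sup'_le _ _ (fun i _ => hqd i)
  refine ⟨q₀, hq₀0, ?_, ?_⟩
  · intro i
    calc distZ (∑ j, A i j * (q₀ j : ℝ))
        ≤ g q₀ := Finset.le_sup'
          (fun i : Fin m => distZ (∑ j, A i j * (q₀ j : ℝ))) (Finset.mem_univ i)
      _ ≤ d := hgle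
  · have habs : ∀ j, |(q₀ j : ℝ)| ≤ (Q:ℝ) := by
      intro j
      have : |q₀ j| ≤ Q := abs_le.mpr (hq₀Q j)
      exact_mod_cast this
    have hsup : (⨆ j, |(q₀ j : ℝ)|) ≤ (Q:ℝ) := ciSup_le habs
    have hsup0 : 0 ≤ ⨆ j, |(q₀ j : ℝ)| := by
      have hb : BddAbove (Set.range fun j => |(q₀ j : ℝ)|) :=
        ⟨(Q:ℝ), by rintro x ⟨j, rfl⟩; exact habs j⟩
      exact le_trans (abs_nonneg _) (le_ciSup hb ⟨0, hn⟩)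
    calc (⨆ j, |(q₀ j : ℝ)|) ^ n ≤ (Q:ℝ) ^ n := pow_le_pow_left₀ hsup0 hsup n
      _ < u ^ n := pow_lt_pow_left₀ hQu hQ0 (by omega)
      _ = t := hun
end

section
/- For every sufficiently large a > 0, the set of positive integers u with φ(u)/u ≥ 1/a has positive lower asymptotic density, and this density tends to 1 as a → ∞. -/
/-!
Since `φ u / u = ∏_{p ∣ u} (1 - 1/p) ≥ exp (-2 ∑_{p ∣ u} 1/p)`, an integer `u` with
`φ u / u < 1/a` has `∑_{p ∣ u} 1/p > (log a) / 2`. On average over `u ≤ N` this prime sum is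
`∑_{p ≤ N} ⌊N/p⌋ / p ≤ N ∑ 1/p² ≤ 2N`, so by Markov's inequality at most `4N / log a` integers
`u ≤ N` are exceptional, and the lower density is at least `1 - 4 / log a`.
-/

open Finset Filter Real
open scoped Nat

lemma Nat.totient_div_self_eq_prod (u : ℕ) (hu : u ≠ 0) :
    (φ u : ℝ) / u = ∏ p ∈ u.primeFactors, (1 - (p : ℝ)⁻¹) := by
  have h := congrArg ((↑) : ℚ → ℝ) (Nat.totient_eq_mul_prod_factors u)
  push_cast at h
  rw [h, mul_div_cancel_left₀ _ (Nat.cast_ne_zero.mpr hu)]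

lemma exp_neg_two_mul_le_one_sub {x : ℝ} (hx₀ : 0 ≤ x) (hx : x ≤ 1 / 2) :
    exp (-(2 * x)) ≤ 1 - x := by
  calc exp (-(2 * x)) = (exp (2 * x))⁻¹ := exp_neg _
    _ ≤ (1 + 2 * x)⁻¹ := by gcongr; linarith [add_one_le_exp (2 * x)]
    _ ≤ 1 - x := by
      rw [inv_le_iff_one_le_mul₀ (by positivity)]
      nlinarith

lemma exp_neg_two_mul_sum_inv_le_totient_div_self (u : ℕ) (hu : u ≠ 0) :
    exp (-(2 * ∑ p ∈ u.primeFactors, (p : ℝ)⁻¹)) ≤ (φ u : ℝ) / u := by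
  rw [Nat.totient_div_self_eq_prod u hu, mul_sum, ← sum_neg_distrib, exp_sum]
  refine prod_le_prod (fun _ _ => (exp_pos _).le) fun p hp => ?_
  have hp : (2 : ℝ) ≤ p := by exact_mod_cast (Nat.prime_of_mem_primeFactors hp).two_le
  exact exp_neg_two_mul_le_one_sub (by positivity) (by rw [inv_le_comm₀] <;> linarith)

lemma Ioc_filter_dvd_card_le_div (N p : ℕ) : (#{u ∈ Ioc 0 N | p ∣ u} : ℝ) ≤ N / p := by
  rw [Nat.Ioc_filter_dvd_card_eq_div]
  exact Nat.cast_div_le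

lemma sum_sum_inv_primeFactors_le (N : ℕ) :
    ∑ u ∈ Ioc 0 N, ∑ p ∈ u.primeFactors, (p : ℝ)⁻¹ ≤ 2 * N := by
  have hswap : ∑ u ∈ Ioc 0 N, ∑ p ∈ u.primeFactors, (p : ℝ)⁻¹ =
      ∑ p ∈ Ioc 0 N, ∑ _u ∈ {u ∈ Ioc 0 N | p ∈ u.primeFactors}, (p : ℝ)⁻¹ := by
    refine sum_comm' fun u p => ?_
    simp only [mem_filter, mem_Ioc]
    constructor
    · rintro ⟨hu, hp⟩
      exact ⟨⟨hu, hp⟩, Nat.pos_of_mem_primeFactors hp, (Nat.le_of_mem_primeFactors hp).trans hu.2⟩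
    · exact fun h => h.1
  have hterm (p : ℕ) :
      ∑ _u ∈ {u ∈ Ioc 0 N | p ∈ u.primeFactors}, (p : ℝ)⁻¹ ≤ N * ((p : ℝ) ^ 2)⁻¹ := by
    have hsub : {u ∈ Ioc 0 N | p ∈ u.primeFactors} ⊆ {u ∈ Ioc 0 N | p ∣ u} :=
      monotone_filter_right _ fun _ _ => Nat.dvd_of_mem_primeFactors
    calc ∑ _u ∈ {u ∈ Ioc 0 N | p ∈ u.primeFactors}, (p : ℝ)⁻¹
        = #{u ∈ Ioc 0 N | p ∈ u.primeFactors} * (p : ℝ)⁻¹ := by rw [sum_const, nsmul_eq_mul]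
      _ ≤ #{u ∈ Ioc 0 N | p ∣ u} * (p : ℝ)⁻¹ := by gcongr
      _ ≤ N / p * (p : ℝ)⁻¹ := by gcongr; exact Ioc_filter_dvd_card_le_div N p
      _ = N * ((p : ℝ) ^ 2)⁻¹ := by ring
  calc ∑ u ∈ Ioc 0 N, ∑ p ∈ u.primeFactors, (p : ℝ)⁻¹
      ≤ ∑ p ∈ Ioc 0 N, N * ((p : ℝ) ^ 2)⁻¹ := hswap ▸ sum_le_sum fun p _ => hterm p
    _ = N * ∑ p ∈ Ioo 0 (N + 1), ((p : ℝ) ^ 2)⁻¹ := by rw [mul_sum, Ioo_add_one_right_eq_Ioc]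
    _ ≤ N * 2 := by gcongr; simpa using sum_Ioo_inv_sq_le (α := ℝ) 0 (N + 1)
    _ = 2 * N := mul_comm _ _

lemma card_filter_totient_div_self_lt_mul_log_le {a : ℝ} (ha : 0 < a) (N : ℕ) :
    #{u ∈ Ioc 0 N | (φ u : ℝ) / u < 1 / a} * log a ≤ 4 * N := by
  set S : ℕ → ℝ := fun u => ∑ p ∈ u.primeFactors, (p : ℝ)⁻¹
  have hlarge : ∀ u ∈ {u ∈ Ioc 0 N | (φ u : ℝ) / u < 1 / a}, log a ≤ 2 * S u := by
    intro u hu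
    rw [mem_filter, mem_Ioc] at hu
    have hlt := (exp_neg_two_mul_sum_inv_le_totient_div_self u hu.1.1.ne').trans_lt hu.2
    rw [← lt_log_iff_exp_lt (by positivity), one_div, log_inv] at hlt
    linarith
  calc #{u ∈ Ioc 0 N | (φ u : ℝ) / u < 1 / a} * log a
      = ∑ _u ∈ {u ∈ Ioc 0 N | (φ u : ℝ) / u < 1 / a}, log a := by rw [sum_const, nsmul_eq_mul]
    _ ≤ ∑ u ∈ {u ∈ Ioc 0 N | (φ u : ℝ) / u < 1 / a}, 2 * S u := sum_le_sum hlarge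
    _ ≤ ∑ u ∈ Ioc 0 N, 2 * S u :=
        sum_le_sum_of_subset_of_nonneg (filter_subset _ _) fun _ _ _ => by positivity
    _ ≤ 4 * N := by
        rw [← mul_sum]
        linarith [sum_sum_inv_primeFactors_le N]

lemma one_sub_four_div_log_le_density {a : ℝ} (ha : 1 < a) {N : ℕ} (hN : N ≠ 0) :
    1 - 4 / log a ≤ (#{u ∈ Icc 1 N | 1 / a ≤ (φ u : ℝ) / u} : ℝ) / N := by
  have hlog : 0 < log a := log_pos ha
  have hN' : (0 : ℝ) < N := by positivity
  have hsplit : (#{u ∈ Icc 1 N | 1 / a ≤ (φ u : ℝ) / u} : ℝ)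
      + #{u ∈ Ioc 0 N | (φ u : ℝ) / u < 1 / a} = N := by
    simp_rw [← not_le]
    -- `Icc 1 N` and `Ioc 0 N` are definitionally equal
    exact_mod_cast (card_filter_add_card_filter_not _).trans (Nat.card_Ioc 0 N)
  have hbad := (le_div_iff₀ hlog).mpr
    (card_filter_totient_div_self_lt_mul_log_le (zero_lt_one.trans ha) N)
  rw [le_div_iff₀ hN', show (1 - 4 / log a) * N = N - 4 * N / log a by ring]
  linarith

lemma one_sub_four_div_log_le_liminf_density {a : ℝ} (ha : 1 < a) :
    1 - 4 / log a ≤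
      liminf (fun N : ℕ => (#{u ∈ Icc 1 N | 1 / a ≤ (φ u : ℝ) / u} : ℝ) / N) atTop := by
  refine le_liminf_of_le (isCoboundedUnder_ge_of_le atTop (x := 1) fun N => ?_) ?_
  · refine div_le_one_of_le₀ ?_ N.cast_nonneg
    exact_mod_cast (card_filter_le _ _).trans (Nat.card_Icc 1 N).le
  · filter_upwards [eventually_ne_atTop 0] with N hN
    exact one_sub_four_div_log_le_density ha hN

/-- Erdős (1946): for every sufficiently large `a > 0`, the set of `u ∈ ℕ` with `φ(u)/u ≥ 1/a`
has positive lower asymptotic density, and this density tends to `1` as `a → ∞`. -/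
theorem erdos_totient_density :
    ∀ ε : ℝ, 0 < ε →
      ∃ a₀ : ℝ, 0 < a₀ ∧ ∀ a : ℝ, a₀ ≤ a →
        0 < Filter.liminf (fun N : ℕ =>
            (((Finset.Icc 1 N).filter fun u =>
              (1 : ℝ) / a ≤ (Nat.totient u : ℝ) / u).card : ℝ) / N) Filter.atTop ∧
        1 - ε ≤ Filter.liminf (fun N : ℕ =>
            (((Finset.Icc 1 N).filter fun u =>
              (1 : ℝ) / a ≤ (Nat.totient u : ℝ) / u).card : ℝ) / N) Filter.atTop := by
  intro ε hε
  refine ⟨exp (4 + 4 / ε), exp_pos _, fun a ha => ?_⟩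
  have hlog : 4 + 4 / ε ≤ log a := (le_log_iff_exp_le ((exp_pos _).trans_le ha)).mpr ha
  have hε' : 0 < 4 / ε := by positivity
  have ha₁ : 1 < a := (one_lt_exp_iff.mpr (by linarith)).trans_le ha
  have hdensity := one_sub_four_div_log_le_liminf_density ha₁
  have hlt_one : 4 / log a < 1 := (div_lt_one (by linarith)).mpr (by linarith)
  have hle_ε : 4 / log a ≤ ε := (div_le_comm₀ (by linarith) hε).mpr (by linarith)
  exact ⟨by linarith, by linarith⟩
end

section
/- Let b ∈ ℝ^m, A ∈ M_{m,n}(ℝ), c > 0, t > 1, and let α ∈ (ℝ₊)^m, β ∈ (ℝ₊)^n with Σα_i = Σβ_j = 1. If there exists q ∈ ℤⁿ such that ‖Aq + b‖_{ℤ,α} ≤ c and |q|_β ≤ t, then for every u ∈ ℤ^m: ‖u·b‖_ℤ ≤ (m+n)·max{ max_{1≤j≤n} t^{β_j} ‖A_{*,j}·u‖_ℤ , max_{1≤i≤m} c^{α_i} |u_i| }, where A_{*,j} denotes the j-th column of A. -/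
/-!
Pairing `u` with the identity `b = (A q + b) - A q` gives
`u·b = u·(A q + b) - q·(Aᵀ u)`. Since `‖·‖_ℤ` is the norm of `ℝ/ℤ`, it is subadditive and
`‖k x‖_ℤ ≤ |k| ‖x‖_ℤ` for `k ∈ ℤ`; so `‖u·b‖_ℤ ≤ Σ |u_i| ‖(A q + b)_i‖_ℤ + Σ |q_j| ‖(Aᵀ u)_j‖_ℤ`.
The hypotheses on `q` read `‖(A q + b)_i‖_ℤ ≤ c^{α_i}` and `|q_j| ≤ t^{β_j}`, so each of the
`m + n` terms is at most the maximum on the right.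
-/

open Matrix Finset

lemma distZ_eq_norm (x : ℝ) : distZ x = ‖(x : UnitAddCircle)‖ :=
  UnitAddCircle.norm_eq.symm

lemma distZ_sub_le (x y : ℝ) : distZ (x - y) ≤ distZ x + distZ y := by
  simpa only [distZ_eq_norm, AddCircle.coe_sub] using norm_sub_le _ _

lemma distZ_intCast_dotProduct_le {ι : Type*} [Fintype ι] (k : ι → ℤ) (x : ι → ℝ) :
    distZ ((fun i ↦ (k i : ℝ)) ⬝ᵥ x) ≤ ∑ i, |(k i : ℝ)| * distZ (x i) := by
  have hterm (i : ι) : ((k i * x i : ℝ) : UnitAddCircle) = k i • (x i : UnitAddCircle) := by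
    rw [← zsmul_eq_mul, AddCircle.coe_zsmul]
  simp only [distZ_eq_norm, dotProduct, QuotientAddGroup.mk_sum, hterm]
  refine (norm_sum_le _ _).trans (sum_le_sum fun i _ ↦ ?_)
  simpa only [Int.norm_eq_abs, Int.cast_abs] using norm_zsmul_le (k i) (x i : UnitAddCircle)

lemma dotProduct_eq_dotProduct_mulVec_add_sub {R ι κ : Type*} [CommRing R] [Fintype ι]
    [Fintype κ] (A : Matrix ι κ R) (b u : ι → R) (q : κ → R) :
    u ⬝ᵥ b = u ⬝ᵥ (A *ᵥ q + b) - q ⬝ᵥ (Aᵀ *ᵥ u) := by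
  rw [dotProduct_add, dotProduct_mulVec, mulVec_transpose, dotProduct_comm q]
  abel

lemma le_rpow_of_iSup_rpow_one_div_le {ι : Type*} [Finite ι] {f a : ι → ℝ} {c : ℝ}
    (hf : ∀ i, 0 ≤ f i) (ha : ∀ i, 0 < a i) (h : ⨆ i, f i ^ (1 / a i) ≤ c) (i : ι) :
    f i ≤ c ^ a i := by
  have hi : f i ^ (1 / a i) ≤ c := (Finite.le_ciSup _ i).trans h
  rw [one_div] at hi
  exact (Real.rpow_inv_le_iff_of_pos (hf i) ((Real.rpow_nonneg (hf i) _).trans hi) (ha i)).1 hi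

theorem transference_part_one_general (m n : ℕ)
    (A : Matrix (Fin m) (Fin n) ℝ) (b : Fin m → ℝ)
    (α : Fin m → ℝ) (hα_pos : ∀ i, 0 < α i)
    (β : Fin n → ℝ) (hβ_pos : ∀ j, 0 < β j)
    (c t : ℝ)
    (q : Fin n → ℤ)
    (hq1 : (⨆ i, distZ ((∑ j, A i j * (q j : ℝ)) + b i) ^ ((1 : ℝ) / α i)) ≤ c)
    (hq2 : (⨆ j, |(q j : ℝ)| ^ ((1 : ℝ) / β j)) ≤ t) :
    ∀ u : Fin m → ℤ,
      distZ (∑ i, (u i : ℝ) * b i) ≤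
        (m + n) * max (⨆ j, t ^ β j * distZ (∑ i, A i j * (u i : ℝ)))
          (⨆ i, c ^ α i * |(u i : ℝ)|) := by
  intro u
  set M := max (⨆ j, t ^ β j * distZ (∑ i, A i j * (u i : ℝ))) (⨆ i, c ^ α i * |(u i : ℝ)|)
  have hAqb := le_rpow_of_iSup_rpow_one_div_le (fun _ ↦ abs_nonneg _) hα_pos hq1
  have hq := le_rpow_of_iSup_rpow_one_div_le (fun _ ↦ abs_nonneg _) hβ_pos hq2
  have hu_term (i : Fin m) : |(u i : ℝ)| * distZ ((∑ j, A i j * (q j : ℝ)) + b i) ≤ M :=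
    le_max_of_le_right <| Finite.le_ciSup_of_le i <| by
      rw [mul_comm]; exact mul_le_mul_of_nonneg_right (hAqb i) (abs_nonneg _)
  have hq_term (j : Fin n) : |(q j : ℝ)| * distZ (∑ i, A i j * (u i : ℝ)) ≤ M :=
    le_max_of_le_left <| Finite.le_ciSup_of_le j <| mul_le_mul_of_nonneg_right (hq j) (abs_nonneg _)
  calc distZ (∑ i, (u i : ℝ) * b i)
      = distZ ((fun i ↦ (u i : ℝ)) ⬝ᵥ (A *ᵥ (fun j ↦ (q j : ℝ)) + b)
          - (fun j ↦ (q j : ℝ)) ⬝ᵥ (Aᵀ *ᵥ fun i ↦ (u i : ℝ))) := by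
        rw [← dotProduct_eq_dotProduct_mulVec_add_sub]; rfl
    _ ≤ ∑ i, |(u i : ℝ)| * distZ ((∑ j, A i j * (q j : ℝ)) + b i)
          + ∑ j, |(q j : ℝ)| * distZ (∑ i, A i j * (u i : ℝ)) :=
        (distZ_sub_le _ _).trans
          (add_le_add (distZ_intCast_dotProduct_le _ _) (distZ_intCast_dotProduct_le _ _))
    _ ≤ ∑ _i : Fin m, M + ∑ _j : Fin n, M :=
        add_le_add (sum_le_sum fun i _ ↦ hu_term i) (sum_le_sum fun j _ ↦ hq_term j)
    _ = (m + n) * M := by simp only [sum_const, card_univ, Fintype.card_fin, nsmul_eq_mul]; ring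

/-- Weighted transference principle (Cassels, Theorem XVII), part (1): a solution of the
inhomogeneous system forces `‖u·b‖_ℤ` to be small for every `u ∈ ℤ^m`. -/
theorem transference_part_one (m n : ℕ) (hm : 0 < m) (hn : 0 < n)
    (A : Matrix (Fin m) (Fin n) ℝ) (b : Fin m → ℝ)
    (α : Fin m → ℝ) (hα_pos : ∀ i, 0 < α i) (hα_sum : ∑ i, α i = 1)
    (β : Fin n → ℝ) (hβ_pos : ∀ j, 0 < β j) (hβ_sum : ∑ j, β j = 1)
    (c t : ℝ) (hc : 0 < c) (ht : 1 < t)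
    (q : Fin n → ℤ)
    (hq1 : (⨆ i, distZ ((∑ j, A i j * (q j : ℝ)) + b i) ^ ((1 : ℝ) / α i)) ≤ c)
    (hq2 : (⨆ j, |(q j : ℝ)| ^ ((1 : ℝ) / β j)) ≤ t) :
    ∀ u : Fin m → ℤ,
      distZ (∑ i, (u i : ℝ) * b i) ≤
        (m + n) * max (⨆ j, t ^ β j * distZ (∑ i, A i j * (u i : ℝ)))
          (⨆ i, c ^ α i * |(u i : ℝ)|) :=
  transference_part_one_general m n A b α hα_pos β hβ_pos c t q hq1 hq2
end

section
/- Let u ∈ ℤ^m \ {0}, δ = (δ₁,…,δ_n) ∈ (ℝ_{>0})^n, and define R'(u,δ) := { A ∈ [0,1]^{mn} : there exists v ∈ ℤⁿ with gcd(u, v_j) = 1 for all j and |A_{*,j}·u − v_j| < δ_j for all 1 ≤ j ≤ n }. Then the mn-dimensional Lebesgue measure of R'(u,δ) satisfies (φ(|u|)/|u|)^n · ∏_{j=1}^n (2δ_j) ≤ L^{mn}(R'(u,δ)) ≤ ∏_{j=1}^n (2δ_j), assuming each δ_j ≤ 1/2. -/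
/-!
The matrix set is the product of its column sets, and a column set is
`{a ∈ [0,1]^m : a·u ∈ T}` where `T` is the `δ`-neighbourhood of
`W = {v ∈ ℤ : gcd(u, v) = 1}`. As `gcd(u)` divides `N = |u|`, both `W` and `T` are
`N`-periodic. Integrating first over a coordinate `i₀` with `|u_{i₀}| = N`, the affine map
`x ↦ u_{i₀} x + t` sends `[0,1]` onto one period of `T`, so every slice, hence the column set,
has measure `N⁻¹ · vol(T ∩ period) = #(W mod N) / N · 2δ`; `δ ≤ 1/2` keeps the intervals around
distinct integers disjoint. Finally `φ(N) ≤ #(W mod N) ≤ N`, because an integer coprime to `N` is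
coprime to `gcd(u)`.
-/

open MeasureTheory Set Metric Function

theorem volume_inter_Ioc_add_eq_of_periodic {T : Set ℝ} {p : ℝ} (hT : MeasurableSet T)
    (hTp : Periodic (· ∈ T) p) (hp : 0 < p) (a b : ℝ) :
    volume (T ∩ Ioc a (a + p)) = volume (T ∩ Ioc b (b + p)) := by
  refine (isAddFundamentalDomain_Ioc hp a).measure_set_eq (isAddFundamentalDomain_Ioc hp b) hT ?_
  rintro ⟨_, k, rfl⟩
  ext x
  simpa [add_comm] using iff_of_eq (hTp.zsmul k x)

theorem volume_inter_uIcc_of_periodic {T : Set ℝ} {p : ℝ} (hT : MeasurableSet T)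
    (hTp : Periodic (· ∈ T) p) (hp : 0 < p) {a b : ℝ} (hab : |b - a| = p) :
    volume (T ∩ uIcc a b) = volume (T ∩ Ioc 0 p) := by
  have hmax : max a b = min a b + p := by
    rw [← hab]; linarith [max_sub_min_eq_abs' a b, abs_sub_comm a b]
  rw [uIcc, hmax, measure_congr (ae_eq_set_inter (ae_eq_refl T) Ioc_ae_eq_Icc.symm),
    volume_inter_Ioc_add_eq_of_periodic hT hTp hp _ 0, zero_add]

theorem volume_restrict_Icc_preimage_mul_add_of_periodic {T : Set ℝ} {c : ℝ} (hc : c ≠ 0)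
    (hT : MeasurableSet T) (hTp : Periodic (· ∈ T) |c|) (t : ℝ) :
    volume.restrict (Icc 0 1) ((fun x => c * x + t) ⁻¹' T) =
      ENNReal.ofReal |c|⁻¹ * volume (T ∩ Ioc 0 |c|) := by
  have hinj : Injective fun x : ℝ => c * x + t := fun x y h => by
    simpa [hc] using h
  have himage : (fun x => c * x + t) '' Icc 0 1 = uIcc t (c + t) := by
    rw [← uIcc_of_le zero_le_one, ← image_image (· + t) (c * ·), image_const_mul_uIcc,
      image_add_const_uIcc]
    simp
  rw [Measure.restrict_apply (hT.preimage (by fun_prop)), ← preimage_image_eq (Icc 0 1) hinj,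
    ← preimage_inter, himage]
  change volume ((c * ·) ⁻¹' ((· + t) ⁻¹' (T ∩ uIcc t (c + t)))) = _
  rw [Real.volume_preimage_mul_left hc, measure_preimage_add_right, abs_inv,
    volume_inter_uIcc_of_periodic hT hTp (abs_pos.2 hc) (by simp)]

theorem volume_pi_Icc_inter_preimage_sum_mul {m : ℕ} {u : Fin m → ℝ} {i₀ : Fin m} (hu : u i₀ ≠ 0)
    {T : Set ℝ} (hT : MeasurableSet T) (hTp : Periodic (· ∈ T) |u i₀|) :
    volume (univ.pi (fun _ => Icc (0 : ℝ) 1) ∩ {a | ∑ i, a i * u i ∈ T}) =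
      ENNReal.ofReal |u i₀|⁻¹ * volume (T ∩ Ioc 0 |u i₀|) := by
  obtain ⟨k, rfl⟩ : ∃ k, m = k + 1 := Nat.exists_eq_succ_of_ne_zero i₀.pos.ne'
  set μ : Measure ℝ := volume.restrict (Icc 0 1)
  set f : ℝ × (Fin k → ℝ) → ℝ := fun p => u i₀ * p.1 + ∑ j, p.2 j * u (i₀.succAbove j)
  have hf : Measurable f := by fun_prop
  have hpreim : {a : Fin (k + 1) → ℝ | ∑ i, a i * u i ∈ T} =
      MeasurableEquiv.piFinSuccAbove (fun _ => ℝ) i₀ ⁻¹' (f ⁻¹' T) := by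
    ext a
    simp [f, Fin.sum_univ_succAbove _ i₀, Fin.removeNth, mul_comm]
  have hprob : (Measure.pi fun _ : Fin k => μ) univ = 1 := by simp [μ, Measure.pi_univ]
  rw [inter_comm, ← Measure.restrict_apply' (MeasurableSet.univ_pi fun _ => measurableSet_Icc),
    volume_pi, Measure.restrict_pi_pi, hpreim,
    (measurePreserving_piFinSuccAbove (fun _ => μ) i₀).measure_preimage_equiv,
    Measure.prod_apply_symm (hf hT)]
  have hslice : ∀ y, μ ((fun x => (x, y)) ⁻¹' (f ⁻¹' T)) =
      ENNReal.ofReal |u i₀|⁻¹ * volume (T ∩ Ioc 0 |u i₀|) := fun y =>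
    volume_restrict_Icc_preimage_mul_add_of_periodic hu hT hTp (∑ j, y j * u (i₀.succAbove j))
  rw [lintegral_congr hslice, lintegral_const, hprob, mul_one]

theorem periodic_mem_thickening_intCast {W : Set ℤ} {N : ℤ} (hW : Periodic (· ∈ W) N) (δ : ℝ) :
    Periodic (· ∈ thickening δ (((↑) : ℤ → ℝ) '' W)) N := by
  intro x
  simp only [mem_thickening_iff, exists_mem_image, Real.dist_eq]
  refine propext ⟨fun ⟨v, hv, h⟩ => ⟨v - N, ?_, ?_⟩, fun ⟨v, hv, h⟩ => ⟨v + N, ?_, ?_⟩⟩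
  · exact (hW (v - N)).mp (by simpa using hv)
  · simpa [sub_sub_eq_add_sub, add_sub_right_comm] using h
  · exact (hW v).mpr hv
  · simpa [add_sub_add_right_eq_sub] using h

/-- The window is shifted by `1/2` so that it contains exactly the intervals around
`0, …, N - 1`. -/
theorem volume_thickening_intCast_inter_Ioc {W : Set ℤ} [DecidablePred (· ∈ W)] {δ : ℝ}
    (hδ : δ ≤ 1 / 2) (N : ℕ) :
    volume (thickening δ (((↑) : ℤ → ℝ) '' W) ∩ Ioc (-1 / 2) (-1 / 2 + N)) =
      ((Finset.range N).filter fun r : ℕ => (r : ℤ) ∈ W).card * ENNReal.ofReal (2 * δ) := by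
  set S := (Finset.range N).filter fun r : ℕ => (r : ℤ) ∈ W
  have hunion : thickening δ (((↑) : ℤ → ℝ) '' W) ∩ Ioc (-1 / 2) (-1 / 2 + N) =
      ⋃ r ∈ S, Ioo ((r : ℝ) - δ) (r + δ) := by
    ext x
    simp only [mem_inter_iff, mem_thickening_iff, Set.exists_mem_image, Real.dist_eq, mem_iUnion,
      Set.mem_Ioo, Set.mem_Ioc, abs_sub_lt_iff, S, Finset.mem_filter, Finset.mem_range,
      exists_prop]
    constructor
    · rintro ⟨⟨v, hv, h₁, h₂⟩, hx₁, hx₂⟩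
      have hv₀ : 0 ≤ v := by
        have : ((-1 : ℤ) : ℝ) < v := by push_cast; linarith
        have : -1 < v := by exact_mod_cast this
        omega
      lift v to ℕ using hv₀
      have hvN : (v : ℝ) < N := by push_cast at *; linarith
      push_cast at h₁ h₂
      exact ⟨v, ⟨by exact_mod_cast hvN, hv⟩, by linarith, by linarith⟩
    · rintro ⟨r, ⟨hr, hrW⟩, h₁, h₂⟩
      have hrN : (r : ℝ) + 1 ≤ N := by exact_mod_cast hr
      have hr₀ : (0 : ℝ) ≤ r := r.cast_nonneg
      exact ⟨⟨r, hrW, by push_cast; linarith, by push_cast; linarith⟩, by linarith, by linarith⟩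
  have hdisj : (S : Set ℕ).PairwiseDisjoint fun r : ℕ => Ioo ((r : ℝ) - δ) (r + δ) := by
    intro r _ s _ hrs
    refine Set.disjoint_left.2 fun x ⟨hr₁, hr₂⟩ ⟨hs₁, hs₂⟩ => ?_
    rcases hrs.lt_or_gt with h | h
    · have : (r : ℝ) + 1 ≤ s := by exact_mod_cast h
      linarith
    · have : (s : ℝ) + 1 ≤ r := by exact_mod_cast h
      linarith
  rw [hunion, measure_biUnion_finset hdisj fun _ _ => measurableSet_Ioo]
  simp only [Real.volume_Ioo, add_sub_sub_cancel, ← two_mul, Finset.sum_const, nsmul_eq_mul]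

theorem volume_cube_setOf_abs_sum_mul_sub_lt {m : ℕ} {u : Fin m → ℤ} {i₀ : Fin m}
    (hu : u i₀ ≠ 0) {W : Set ℤ} [DecidablePred (· ∈ W)] (hW : Periodic (· ∈ W) (u i₀)) {δ : ℝ}
    (hδ : δ ≤ 1 / 2) :
    volume {a : Fin m → ℝ | (∀ i, a i ∈ Icc 0 1) ∧ ∃ v ∈ W, |∑ i, a i * u i - v| < δ} =
      ENNReal.ofReal (((Finset.range (u i₀).natAbs).filter fun r : ℕ => (r : ℤ) ∈ W).card /
        (u i₀).natAbs * (2 * δ)) := by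
  set T := thickening δ (((↑) : ℤ → ℝ) '' W)
  have hTp : Periodic (· ∈ T) |(u i₀ : ℝ)| := by
    have := periodic_mem_thickening_intCast hW δ
    rcases abs_choice (u i₀ : ℝ) with h | h <;> rw [h]
    exacts [this, this.neg]
  have hset : {a : Fin m → ℝ | (∀ i, a i ∈ Icc 0 1) ∧ ∃ v ∈ W, |∑ i, a i * u i - v| < δ} =
      univ.pi (fun _ => Icc 0 1) ∩ {a | ∑ i, a i * (u i : ℝ) ∈ T} := by
    ext a
    simp [T, mem_thickening_iff, Real.dist_eq, -Set.pi_univ_Icc]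
  have hNabs : ((u i₀).natAbs : ℝ) = |(u i₀ : ℝ)| := by simp [Nat.cast_natAbs]
  rw [hset, volume_pi_Icc_inter_preimage_sum_mul (u := fun i => (u i : ℝ)) (by exact_mod_cast hu)
    isOpen_thickening.measurableSet hTp, ← zero_add |(u i₀ : ℝ)|,
    volume_inter_Ioc_add_eq_of_periodic isOpen_thickening.measurableSet (by simpa using hTp)
      (by simpa using hu) 0 (-1 / 2), ← hNabs, zero_add, volume_thickening_intCast_inter_Ioc hδ,
    ← ENNReal.ofReal_natCast, ← ENNReal.ofReal_mul (by positivity),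
    ← ENNReal.ofReal_mul (by positivity), div_eq_inv_mul, mul_assoc]

theorem Nat.gcd_natAbs_add_of_dvd {g : ℕ} {c : ℤ} (h : (g : ℤ) ∣ c) (v : ℤ) :
    Nat.gcd g (v + c).natAbs = Nat.gcd g v.natAbs := by
  obtain ⟨k, rfl⟩ := h
  exact Int.gcd_add_mul_left_right g v k

/-- `R'(u, δ)` for `n = 1`, a matrix being identified with its single column. -/
def coprimeApproxSet {m : ℕ} (u : Fin m → ℤ) (δ : ℝ) : Set (Fin m → ℝ) :=
  {a | (∀ i, a i ∈ Icc 0 1) ∧ ∃ v : ℤ,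
    Nat.gcd (Finset.univ.gcd fun i => (u i).natAbs) v.natAbs = 1 ∧ |∑ i, a i * (u i : ℝ) - v| < δ}

theorem volume_coprimeApproxSet_bounds {m : ℕ} {u : Fin m → ℤ} (hu : u ≠ 0) {δ : ℝ}
    (hδ₀ : 0 ≤ δ) (hδ : δ ≤ 1 / 2) :
    ENNReal.ofReal ((Nat.totient (Finset.univ.sup fun i => (u i).natAbs) : ℝ) /
        (Finset.univ.sup fun i => (u i).natAbs : ℕ) * (2 * δ)) ≤ volume (coprimeApproxSet u δ) ∧
      volume (coprimeApproxSet u δ) ≤ ENNReal.ofReal (2 * δ) := by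
  set N := Finset.univ.sup fun i => (u i).natAbs
  set g := Finset.univ.gcd fun i => (u i).natAbs
  set W : Set ℤ := {v | Nat.gcd g v.natAbs = 1}
  obtain ⟨i₁, hi₁⟩ := Function.ne_iff.mp hu
  obtain ⟨i₀, -, hi₀⟩ : ∃ i ∈ Finset.univ, N = (u i).natAbs :=
    Finset.univ.exists_mem_eq_sup ⟨i₁, Finset.mem_univ _⟩ _
  have hN : 0 < N := (Int.natAbs_pos.2 hi₁).trans_le
    (Finset.le_sup (f := fun i => (u i).natAbs) (Finset.mem_univ i₁))
  have hgN : g ∣ N := hi₀ ▸ Finset.gcd_dvd (Finset.mem_univ i₀)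
  have hW : Periodic (· ∈ W) (u i₀) := fun v => by
    simp [W, Nat.gcd_natAbs_add_of_dvd (Int.natCast_dvd.2 (hi₀ ▸ hgN))]
  set S := (Finset.range N).filter fun r : ℕ => (r : ℤ) ∈ W
  have hvol : volume (coprimeApproxSet u δ) = ENNReal.ofReal (S.card / N * (2 * δ)) := by
    have := volume_cube_setOf_abs_sum_mul_sub_lt (Int.natAbs_ne_zero.mp (hi₀ ▸ hN.ne')) hW hδ
    rwa [← hi₀] at this
  have htotient : N.totient ≤ S.card := by
    rw [Nat.totient_eq_card_coprime]
    exact Finset.card_le_card fun r => by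
      simpa [S, W] using fun hr hc => ⟨hr, Nat.Coprime.coprime_dvd_left hgN hc⟩
  have hSN : (S.card : ℝ) ≤ N := by
    exact_mod_cast (Finset.card_filter_le _ _).trans_eq (Finset.card_range N)
  rw [hvol]
  constructor <;> refine ENNReal.ofReal_le_ofReal ?_
  · gcongr
  · exact mul_le_of_le_one_left (by positivity) (div_le_one_of_le₀ hSN N.cast_nonneg)

theorem measure_R'_general (m n : ℕ)
    (u : Fin m → ℤ) (hu : u ≠ 0)
    (δ : Fin n → ℝ) (hδ_pos : ∀ j, 0 < δ j) (hδ_le : ∀ j, δ j ≤ 1 / 2) :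
    ENNReal.ofReal
        (((Nat.totient (Finset.univ.sup fun i => (u i).natAbs) : ℝ) /
            (Finset.univ.sup fun i => (u i).natAbs : ℕ)) ^ n * ∏ j, (2 * δ j)) ≤
      volume {A : Fin n → Fin m → ℝ |
        (∀ j i, A j i ∈ Set.Icc (0 : ℝ) 1) ∧
        ∃ v : Fin n → ℤ, ∀ j,
          Nat.gcd (Finset.univ.gcd fun i => (u i).natAbs) (v j).natAbs = 1 ∧
          |(∑ i, A j i * (u i : ℝ)) - (v j : ℝ)| < δ j} ∧
    volume {A : Fin n → Fin m → ℝ |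
        (∀ j i, A j i ∈ Set.Icc (0 : ℝ) 1) ∧
        ∃ v : Fin n → ℤ, ∀ j,
          Nat.gcd (Finset.univ.gcd fun i => (u i).natAbs) (v j).natAbs = 1 ∧
          |(∑ i, A j i * (u i : ℝ)) - (v j : ℝ)| < δ j} ≤
      ENNReal.ofReal (∏ j, (2 * δ j)) := by
  set N := Finset.univ.sup fun i => (u i).natAbs
  have hpi : {A : Fin n → Fin m → ℝ | (∀ j i, A j i ∈ Icc (0 : ℝ) 1) ∧ ∃ v : Fin n → ℤ, ∀ j,
      Nat.gcd (Finset.univ.gcd fun i => (u i).natAbs) (v j).natAbs = 1 ∧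
        |(∑ i, A j i * (u i : ℝ)) - (v j : ℝ)| < δ j} =
      univ.pi fun j => coprimeApproxSet u (δ j) := by
    ext A
    simp [coprimeApproxSet, Classical.skolem, forall_and, -Set.pi_univ_Icc]
  have hprod : ((N.totient : ℝ) / N) ^ n * ∏ j, (2 * δ j) =
      ∏ j, ((N.totient : ℝ) / N * (2 * δ j)) := by
    rw [Finset.prod_mul_distrib (f := fun _ => (N.totient : ℝ) / N), Finset.prod_const,
      Finset.card_univ, Fintype.card_fin]
  have hcol := fun j => volume_coprimeApproxSet_bounds hu (hδ_pos j).le (hδ_le j)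
  rw [hpi, volume_pi_pi, hprod, ENNReal.ofReal_prod_of_nonneg fun j _ => by
      have := hδ_pos j; positivity,
    ENNReal.ofReal_prod_of_nonneg fun j _ => by have := hδ_pos j; positivity]
  exact ⟨Finset.prod_le_prod' fun j _ => (hcol j).1, Finset.prod_le_prod' fun j _ => (hcol j).2⟩

/-- Measure bound in Lemma 5.4: the set `R'(u,δ)` of matrices (given by their columns) whose
columns satisfy `|A_{*,j}·u − v_j| < δ_j` for some `v` with `gcd(u, v_j) = 1` has Lebesgue
measure between `(φ(|u|)/|u|)^n ∏ 2δ_j` and `∏ 2δ_j`. -/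
theorem measure_R' (m n : ℕ) (hm : 0 < m) (hn : 0 < n)
    (u : Fin m → ℤ) (hu : u ≠ 0)
    (δ : Fin n → ℝ) (hδ_pos : ∀ j, 0 < δ j) (hδ_le : ∀ j, δ j ≤ 1 / 2) :
    ENNReal.ofReal
        (((Nat.totient (Finset.univ.sup fun i => (u i).natAbs) : ℝ) /
            (Finset.univ.sup fun i => (u i).natAbs : ℕ)) ^ n * ∏ j, (2 * δ j)) ≤
      volume {A : Fin n → Fin m → ℝ |
        (∀ j i, A j i ∈ Set.Icc (0 : ℝ) 1) ∧
        ∃ v : Fin n → ℤ, ∀ j,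
          Nat.gcd (Finset.univ.gcd fun i => (u i).natAbs) (v j).natAbs = 1 ∧
          |(∑ i, A j i * (u i : ℝ)) - (v j : ℝ)| < δ j} ∧
    volume {A : Fin n → Fin m → ℝ |
        (∀ j i, A j i ∈ Set.Icc (0 : ℝ) 1) ∧
        ∃ v : Fin n → ℤ, ∀ j,
          Nat.gcd (Finset.univ.gcd fun i => (u i).natAbs) (v j).natAbs = 1 ∧
          |(∑ i, A j i * (u i : ℝ)) - (v j : ℝ)| < δ j} ≤
      ENNReal.ofReal (∏ j, (2 * δ j)) :=
  measure_R'_general m n u hu δ hδ_pos hδ_le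
end
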